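/- Let (Ω, F₀, P) be a probability space, m, ℓ ∈ ℕ with ℓ ≥ 1, λ positive weights on ℝ^m, and Y : Ω → ℝ^m measurable with E[‖Y‖_λ²] < ∞. Suppose Γ* = (γ*₁,…,γ*_ℓ) ∈ (ℝ^m)^ℓ minimizes the quantization error e(Γ) over all tuples Γ ∈ (ℝ^m)^ℓ. Then the nearest-prototype image q_{Γ*}(Y) equals the conditional expectation of Y given the σ-algebra generated by q_{Γ*}(Y), P-almost surely: q_{Γ*}∘Y = E[Y ∣ σ(q_{Γ*}∘Y)] a.e. -/

import Mathlib

/-!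
The map `y ↦ (√λᵢ yᵢ)ᵢ` makes `‖·‖_λ` a Euclidean norm, so we may argue in an inner product
space. Let `S_j = {i(Y) = j}` be the cells of the optimal codebook. By the parallel axis
identity, replacing `γ*_j` by the mean `c` of `Y` on `S_j` lowers the distortion on `S_j` by
`P(S_j) ‖c - γ*_j‖²` without raising it elsewhere; optimality therefore forces `γ*_j = c` whenever
`P(S_j) > 0`. Every set of `σ(q_{Γ*}(Y))` is a union of cells, on each of which `q_{Γ*}(Y)` and `Y`
now have the same integral, which is the defining property of the conditional expectation.
-/

open MeasureTheory Finset

noncomputable section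

/-- The weighted inner product `⟨y,y'⟩_λ = ∑ i, λᵢ yᵢ y'ᵢ` on `ℝ^m`. -/
def wip {m : ℕ} (lam : Fin m → ℝ) (y y' : Fin m → ℝ) : ℝ := ∑ i, lam i * y i * y' i

/-- The squared weighted norm `‖y‖_λ²`. -/
def wnormSq {m : ℕ} (lam : Fin m → ℝ) (y : Fin m → ℝ) : ℝ := wip lam y y

/-- The weighted norm `‖y‖_λ`. -/
def wnorm {m : ℕ} (lam : Fin m → ℝ) (y : Fin m → ℝ) : ℝ := Real.sqrt (wnormSq lam y)

/-- The set of indices minimizing `‖y - γᵢ‖_λ`. -/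
def minimizers {m ℓ : ℕ} (lam : Fin m → ℝ) (Γ : Fin ℓ → Fin m → ℝ) (y : Fin m → ℝ) :
    Finset (Fin ℓ) :=
  Finset.univ.filter fun i => ∀ j, wnorm lam (y - Γ i) ≤ wnorm lam (y - Γ j)

lemma minimizers_nonempty {m ℓ : ℕ} [NeZero ℓ] (lam : Fin m → ℝ) (Γ : Fin ℓ → Fin m → ℝ)
    (y : Fin m → ℝ) : (minimizers lam Γ y).Nonempty := by
  obtain ⟨i, -, hi⟩ := Finset.exists_min_image Finset.univ
    (fun i => wnorm lam (y - Γ i)) ⟨0, Finset.mem_univ _⟩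
  exact ⟨i, by simpa [minimizers] using fun j => hi j (Finset.mem_univ j)⟩

/-- The nearest-prototype map `q_Γ`: sends `y` to `γ_{i(y)}` where `i(y)` is the smallest
index minimizing `‖y - γᵢ‖_λ`. -/
def q {m ℓ : ℕ} [NeZero ℓ] (lam : Fin m → ℝ) (Γ : Fin ℓ → Fin m → ℝ) (y : Fin m → ℝ) :
    Fin m → ℝ :=
  Γ ((minimizers lam Γ y).min' (minimizers_nonempty lam Γ y))

/-- The quantization error `e(Γ) = (E[minᵢ ‖Y - γᵢ‖_λ²])^{1/2}`. -/
def quantErr {m ℓ : ℕ} [NeZero ℓ] (lam : Fin m → ℝ) (Γ : Fin ℓ → Fin m → ℝ)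
    {Ω : Type*} [MeasurableSpace Ω] (μ : Measure Ω) (Y : Ω → Fin m → ℝ) : ℝ :=
  Real.sqrt (∫ ω, ⨅ i, (wnorm lam (Y ω - Γ i)) ^ 2 ∂μ)

open scoped InnerProductSpace

section Distortion

variable {Ω E ι : Type*} [MeasurableSpace Ω] {μ : Measure Ω} [NormedAddCommGroup E]

def distortion (μ : Measure Ω) (Z : Ω → E) (Γ : ι → E) : ℝ :=
  ∫ ω, ⨅ i, ‖Z ω - Γ i‖ ^ 2 ∂μ

lemma distortion_nonneg (Z : Ω → E) (Γ : ι → E) : 0 ≤ distortion μ Z Γ :=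
  integral_nonneg fun _ => Real.iInf_nonneg fun _ => sq_nonneg _

lemma iInf_norm_sub_sq_le (z : E) (Γ : ι → E) (i : ι) :
    ⨅ k, ‖z - Γ k‖ ^ 2 ≤ ‖z - Γ i‖ ^ 2 :=
  ciInf_le ⟨0, by rintro _ ⟨k, rfl⟩; positivity⟩ i

lemma iInf_norm_sub_sq_eq {z : E} {Γ : ι → E} {j : ι} (hj : ∀ i, ‖z - Γ j‖ ≤ ‖z - Γ i‖) :
    ⨅ i, ‖z - Γ i‖ ^ 2 = ‖z - Γ j‖ ^ 2 :=
  have : Nonempty ι := ⟨j⟩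
  (iInf_norm_sub_sq_le z Γ j).antisymm
    (le_ciInf fun i => pow_le_pow_left₀ (norm_nonneg _) (hj i) 2)

variable [InnerProductSpace ℝ E] [CompleteSpace E]

lemma integral_norm_sub_sq_eq_add [IsFiniteMeasure μ] {Z : Ω → E} (hZ : MemLp Z 2 μ) {c : E}
    (hc : ∫ ω, Z ω ∂μ = μ.real Set.univ • c) (v : E) :
    ∫ ω, ‖Z ω - v‖ ^ 2 ∂μ = ∫ ω, ‖Z ω - c‖ ^ 2 ∂μ + μ.real Set.univ * ‖c - v‖ ^ 2 := by
  have hZc : Integrable (fun ω => ‖Z ω - c‖ ^ 2) μ :=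
    (memLp_two_iff_integrable_sq_norm (hZ.sub (memLp_const c)).1).1 (hZ.sub (memLp_const c))
  have hInt : Integrable (fun ω => Z ω - c) μ := (hZ.integrable one_le_two).sub (integrable_const c)
  have hcross : ∫ ω, ⟪c - v, Z ω - c⟫_ℝ ∂μ = 0 := by
    rw [integral_inner hInt, integral_sub (hZ.integrable one_le_two) (integrable_const c),
      integral_const, hc, sub_self, inner_zero_right]
  calc ∫ ω, ‖Z ω - v‖ ^ 2 ∂μ
      = ∫ ω, (‖c - v‖ ^ 2 + 2 * ⟪c - v, Z ω - c⟫_ℝ + ‖Z ω - c‖ ^ 2) ∂μ := by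
        congr with ω
        rw [← norm_add_sq_real, sub_add_sub_cancel']
    _ = ∫ ω, ‖Z ω - c‖ ^ 2 ∂μ + μ.real Set.univ * ‖c - v‖ ^ 2 := by
        have hcrossInt : Integrable (fun ω => 2 * ⟪c - v, Z ω - c⟫_ℝ) μ :=
          (hInt.const_inner (c - v)).const_mul 2
        rw [integral_add (f := fun ω => ‖c - v‖ ^ 2 + 2 * ⟪c - v, Z ω - c⟫_ℝ)
            ((integrable_const _).add hcrossInt) hZc,
          integral_add (integrable_const _) hcrossInt, integral_const_mul, hcross,
          integral_const, smul_eq_mul]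
        ring

end Distortion

section Optimality

variable {Ω E ι : Type*} [MeasurableSpace Ω] {μ : Measure Ω} [IsFiniteMeasure μ]
  [NormedAddCommGroup E] [InnerProductSpace ℝ E] [CompleteSpace E]
  [MeasurableSpace ι] [MeasurableSingletonClass ι] [Countable ι]
  {Z : Ω → E} {Γ : ι → E} {f : Ω → ι}

lemma distortion_update_add_le [DecidableEq ι] (hZ : MemLp Z 2 μ) (hf : Measurable f)
    (hnear : ∀ ω i, ‖Z ω - Γ (f ω)‖ ≤ ‖Z ω - Γ i‖) {j : ι} {c : E}
    (hc : ∫ ω in f ⁻¹' {j}, Z ω ∂μ = μ.real (f ⁻¹' {j}) • c) :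
    distortion μ Z (Function.update Γ j c) + μ.real (f ⁻¹' {j}) * ‖c - Γ j‖ ^ 2 ≤
      distortion μ Z Γ := by
  classical
  set S := f ⁻¹' {j}
  have hS : MeasurableSet S := hf (measurableSet_singleton j)
  set h := fun ω => ‖Z ω - Γ (f ω)‖ ^ 2
  have hsq : ∀ v, Integrable (fun ω => ‖Z ω - v‖ ^ 2) μ := fun v =>
    (memLp_two_iff_integrable_sq_norm (hZ.sub (memLp_const v)).1).1 (hZ.sub (memLp_const v))
  have hh : Integrable h μ := by
    refine (hsq (Γ j)).mono' ?_ (ae_of_all _ fun ω => ?_)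
    · exact ((hZ.1.sub (StronglyMeasurable.of_discrete.comp_measurable hf).aestronglyMeasurable
        ).norm.pow 2)
    · rw [Real.norm_of_nonneg (sq_nonneg _)]
      exact pow_le_pow_left₀ (norm_nonneg _) (hnear ω j) 2
  have hD : distortion μ Z Γ = ∫ ω, h ω ∂μ :=
    integral_congr_ae (ae_of_all _ fun ω => iInf_norm_sub_sq_eq (hnear ω))
  have hD' : distortion μ Z (Function.update Γ j c) ≤
      ∫ ω, S.piecewise (fun ω => ‖Z ω - c‖ ^ 2) h ω ∂μ := by
    refine integral_mono_of_nonneg (ae_of_all _ fun ω => Real.iInf_nonneg fun _ => sq_nonneg _)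
      (Integrable.piecewise hS (hsq c).integrableOn hh.integrableOn) (ae_of_all _ fun ω => ?_)
    by_cases hω : f ω = j
    · simpa [S, Set.piecewise, hω] using iInf_norm_sub_sq_le (Z ω) (Function.update Γ j c) j
    · simpa [S, Set.piecewise, hω] using
        iInf_norm_sub_sq_le (Z ω) (Function.update Γ j c) (f ω)
  have hcell : ∫ ω in S, ‖Z ω - Γ j‖ ^ 2 ∂μ =
      ∫ ω in S, ‖Z ω - c‖ ^ 2 ∂μ + μ.real S * ‖c - Γ j‖ ^ 2 := by
    simpa only [measureReal_restrict_apply_univ] using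
      integral_norm_sub_sq_eq_add (hZ.restrict S) (by rwa [measureReal_restrict_apply_univ]) (Γ j)
  have hhS : ∫ ω in S, h ω ∂μ = ∫ ω in S, ‖Z ω - Γ j‖ ^ 2 ∂μ :=
    setIntegral_congr_fun hS fun ω hω => by simp only [h, show f ω = j from hω]
  calc distortion μ Z (Function.update Γ j c) + μ.real S * ‖c - Γ j‖ ^ 2
      ≤ ∫ ω, S.piecewise (fun ω => ‖Z ω - c‖ ^ 2) h ω ∂μ + μ.real S * ‖c - Γ j‖ ^ 2 := by
        gcongr
    _ = ∫ ω in S, h ω ∂μ + ∫ ω in Sᶜ, h ω ∂μ := by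
        rw [integral_piecewise hS (hsq c).integrableOn hh.integrableOn, hhS, hcell]
        ring
    _ = distortion μ Z Γ := by rw [integral_add_compl hS hh, hD]

theorem setIntegral_preimage_eq_smul_of_forall_distortion_le (hZ : MemLp Z 2 μ)
    (hf : Measurable f) (hnear : ∀ ω i, ‖Z ω - Γ (f ω)‖ ≤ ‖Z ω - Γ i‖)
    (hopt : ∀ Γ' : ι → E, distortion μ Z Γ ≤ distortion μ Z Γ') (j : ι) :
    ∫ ω in f ⁻¹' {j}, Z ω ∂μ = μ.real (f ⁻¹' {j}) • Γ j := by
  classical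
  set p := μ.real (f ⁻¹' {j})
  by_cases hp : p = 0
  · rw [hp, zero_smul]
    exact setIntegral_measure_zero _ ((measureReal_eq_zero_iff).1 hp)
  set c := p⁻¹ • ∫ ω in f ⁻¹' {j}, Z ω ∂μ
  have hc : ∫ ω in f ⁻¹' {j}, Z ω ∂μ = p • c := (smul_inv_smul₀ hp _).symm
  have hgain : p * ‖c - Γ j‖ ^ 2 ≤ 0 := by
    linarith [distortion_update_add_le hZ hf hnear hc, hopt (Function.update Γ j c)]
  have hcj : c = Γ j := by
    have hp' : 0 < p := measureReal_nonneg.lt_of_ne' hp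
    have : ‖c - Γ j‖ ^ 2 = 0 := le_antisymm (nonpos_of_mul_nonpos_right hgain hp') (sq_nonneg _)
    simpa [sub_eq_zero] using this
  rw [hc, hcj]

end Optimality

section ConditionalExpectation

variable {Ω E ι : Type*} [MeasurableSpace Ω] {μ : Measure Ω}
  [NormedAddCommGroup E] [NormedSpace ℝ E] [MeasurableSpace ι] [MeasurableSingletonClass ι]
  [Fintype ι] {f : Ω → ι}

lemma setIntegral_preimage_eq_sum (hf : Measurable f) {Y : Ω → E} (hY : Integrable Y μ)
    (A : Set ι) [DecidablePred (· ∈ A)] :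
    ∫ ω in f ⁻¹' A, Y ω ∂μ = ∑ j ∈ univ.filter (· ∈ A), ∫ ω in f ⁻¹' {j}, Y ω ∂μ := by
  have hA : f ⁻¹' A = ⋃ j ∈ univ.filter (· ∈ A), f ⁻¹' {j} := by ext; simp
  rw [hA, integral_biUnion_finset _ (fun j _ => hf (measurableSet_singleton j))
    (Set.pairwiseDisjoint_fiber f _) (fun _ _ => hY.integrableOn)]

theorem comp_ae_eq_condExp_comap [IsFiniteMeasure μ] [CompleteSpace E] [MeasurableSpace E]
    [BorelSpace E] (hf : Measurable f) {Y : Ω → E} (hY : Integrable Y μ) (Γ : ι → E)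
    (hcell : ∀ j, ∫ ω in f ⁻¹' {j}, Y ω ∂μ = μ.real (f ⁻¹' {j}) • Γ j) :
    (fun ω => Γ (f ω)) =ᵐ[μ] μ[Y | MeasurableSpace.comap (fun ω => Γ (f ω)) inferInstance] := by
  classical
  have hQ : Measurable fun ω => Γ (f ω) := Measurable.of_discrete.comp hf
  have hQint : Integrable (fun ω => Γ (f ω)) μ :=
    .of_bound (StronglyMeasurable.of_discrete.comp_measurable hf).aestronglyMeasurable ‖Γ‖
      (ae_of_all _ fun ω => norm_le_pi_norm Γ _)
  refine ae_eq_condExp_of_forall_setIntegral_eq hQ.comap_le hY (fun _ _ _ => hQint.integrableOn)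
    ?_ ?_
  · rintro _ ⟨B, -, rfl⟩ -
    rw [show (fun ω => Γ (f ω)) ⁻¹' B = f ⁻¹' (Γ ⁻¹' B) from rfl,
      setIntegral_preimage_eq_sum hf hQint, setIntegral_preimage_eq_sum hf hY]
    refine sum_congr rfl fun j _ => ?_
    rw [hcell, setIntegral_congr_fun (hf (measurableSet_singleton j)) fun ω hω =>
      congrArg Γ (show f ω = j from hω), setIntegral_const]
  · exact (stronglyMeasurable_iff_measurable_separable.2
      ⟨comap_measurable _, ((Set.finite_range Γ).subset
        (Set.range_comp_subset_range f Γ)).isSeparable⟩).aestronglyMeasurable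

end ConditionalExpectation

section Weighted

variable {m ℓ : ℕ} {lam : Fin m → ℝ}

def weightedEquiv (lam : Fin m → ℝ) (hlam : ∀ i, 0 < lam i) :
    (Fin m → ℝ) ≃L[ℝ] EuclideanSpace ℝ (Fin m) :=
  LinearEquiv.toContinuousLinearEquiv
    { toFun := fun y => WithLp.toLp 2 fun i => √(lam i) * y i
      invFun := fun z i => z i / √(lam i)
      map_add' := fun y y' => by ext i; simp [mul_add]
      map_smul' := fun a y => by ext i; simp; ring
      left_inv := fun y => by ext i; simp [(Real.sqrt_pos.2 (hlam i)).ne']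
      right_inv := fun z => by ext i; simp [mul_div_cancel₀ _ (Real.sqrt_pos.2 (hlam i)).ne'] }

lemma wnormSq_eq_norm_weightedEquiv_sq (hlam : ∀ i, 0 < lam i) (y : Fin m → ℝ) :
    wnormSq lam y = ‖weightedEquiv lam hlam y‖ ^ 2 := by
  rw [EuclideanSpace.norm_eq, Real.sq_sqrt (by positivity), wnormSq, wip]
  refine sum_congr rfl fun i _ => ?_
  simp [weightedEquiv, mul_pow, Real.sq_sqrt (hlam i).le]
  ring

lemma quantErr_eq_sqrt_distortion [NeZero ℓ] {F : Type*} [NormedAddCommGroup F] [NormedSpace ℝ F]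
    (T : (Fin m → ℝ) ≃L[ℝ] F) (hT : ∀ y, wnormSq lam y = ‖T y‖ ^ 2) (Γ : Fin ℓ → Fin m → ℝ)
    {Ω : Type*} [MeasurableSpace Ω] (μ : Measure Ω) (Y : Ω → Fin m → ℝ) :
    quantErr lam Γ μ Y = √(distortion μ (fun ω => T (Y ω)) fun i => T (Γ i)) := by
  have hsq : ∀ y, wnorm lam y ^ 2 = ‖T y‖ ^ 2 := fun y => by
    rw [wnorm, hT, Real.sq_sqrt (sq_nonneg _)]
  simp only [quantErr, distortion, hsq, map_sub]

lemma distortion_le_of_forall_quantErr_le [NeZero ℓ] {F : Type*} [NormedAddCommGroup F]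
    [NormedSpace ℝ F] (T : (Fin m → ℝ) ≃L[ℝ] F) (hT : ∀ y, wnormSq lam y = ‖T y‖ ^ 2)
    {Γs : Fin ℓ → Fin m → ℝ} {Ω : Type*} [MeasurableSpace Ω] {μ : Measure Ω}
    {Y : Ω → Fin m → ℝ}
    (hopt : ∀ Γ : Fin ℓ → Fin m → ℝ, quantErr lam Γs μ Y ≤ quantErr lam Γ μ Y) (Γ' : Fin ℓ → F) :
    distortion μ (fun ω => T (Y ω)) (fun i => T (Γs i)) ≤ distortion μ (fun ω => T (Y ω)) Γ' := by
  have h := hopt fun i => T.symm (Γ' i)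
  simp only [quantErr_eq_sqrt_distortion T hT, ContinuousLinearEquiv.apply_symm_apply] at h
  exact (Real.sqrt_le_sqrt_iff (distortion_nonneg _ _)).1 h

end Weighted

section NearestIndex

variable {m ℓ : ℕ} {lam : Fin m → ℝ} {Γ : Fin ℓ → Fin m → ℝ}

lemma measurableSet_mem_minimizers (i : Fin ℓ) :
    MeasurableSet {y | i ∈ minimizers lam Γ y} := by
  simp only [minimizers, mem_filter, mem_univ, true_and, Set.ofPred_forall]
  exact MeasurableSet.iInter fun j => measurableSet_le (by unfold wnorm wnormSq wip; fun_prop)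
    (by unfold wnorm wnormSq wip; fun_prop)

variable [NeZero ℓ]

/-- The paper's `i(y)`: `q lam Γ y` unfolds to `Γ (nearestIndex lam Γ y)`. -/
def nearestIndex (lam : Fin m → ℝ) (Γ : Fin ℓ → Fin m → ℝ) (y : Fin m → ℝ) : Fin ℓ :=
  (minimizers lam Γ y).min' (minimizers_nonempty lam Γ y)

lemma wnorm_sub_nearestIndex_le (y : Fin m → ℝ) (j : Fin ℓ) :
    wnorm lam (y - Γ (nearestIndex lam Γ y)) ≤ wnorm lam (y - Γ j) :=
  (mem_filter.1 (min'_mem _ (minimizers_nonempty lam Γ y))).2 j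

lemma measurable_nearestIndex : Measurable (nearestIndex lam Γ) := by
  refine measurable_to_countable' fun j => ?_
  have : nearestIndex lam Γ ⁻¹' {j} =
      {y | j ∈ minimizers lam Γ y} ∩ ⋂ k < j, {y | k ∈ minimizers lam Γ y}ᶜ := by
    ext y
    simp only [Set.mem_preimage, Set.mem_singleton_iff, nearestIndex, min'_eq_iff,
      Set.mem_inter_iff, Set.mem_iInter, Set.mem_compl_iff, Set.mem_ofPred_eq]
    exact and_congr_right fun _ => forall_congr' fun k => by rw [← not_lt]; tauto
  rw [this]
  exact (measurableSet_mem_minimizers j).inter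
    (.iInter fun k => .iInter fun _ => (measurableSet_mem_minimizers k).compl)

end NearestIndex

/-- **Optimal quantization (Kieffer, Cuesta-Albertos).** If `Γ*` minimizes the quantization
error, then `q_{Γ*} ∘ Y = E[Y ∣ σ(q_{Γ*} ∘ Y)]` almost surely. -/
theorem optimal_quantization_condexp
    {Ω : Type*} [MeasurableSpace Ω] (μ : Measure Ω) [IsProbabilityMeasure μ]
    {m ℓ : ℕ} [NeZero ℓ] (lam : Fin m → ℝ) (hlam : ∀ i, 0 < lam i)
    (Y : Ω → Fin m → ℝ) (hYmeas : Measurable Y)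
    (hY2 : Integrable (fun ω => wnormSq lam (Y ω)) μ)
    (Γs : Fin ℓ → Fin m → ℝ)
    (hopt : ∀ Γ : Fin ℓ → Fin m → ℝ, quantErr lam Γs μ Y ≤ quantErr lam Γ μ Y) :
    (fun ω => q lam Γs (Y ω)) =ᵐ[μ]
      μ[Y | MeasurableSpace.comap (fun ω => q lam Γs (Y ω)) inferInstance] := by
  obtain ⟨T, hT⟩ : ∃ T : (Fin m → ℝ) ≃L[ℝ] EuclideanSpace ℝ (Fin m),
      ∀ y, wnormSq lam y = ‖T y‖ ^ 2 :=
    ⟨weightedEquiv lam hlam, wnormSq_eq_norm_weightedEquiv_sq hlam⟩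
  have hZ : MemLp (fun ω => T (Y ω)) 2 μ :=
    (memLp_two_iff_integrable_sq_norm (T.continuous.measurable.comp hYmeas).aestronglyMeasurable).2
      (by simpa only [hT, Function.comp_apply] using hY2)
  have hnear : ∀ ω i, ‖T (Y ω) - T (Γs (nearestIndex lam Γs (Y ω)))‖ ≤ ‖T (Y ω) - T (Γs i)‖ :=
    fun ω i => by
      simpa only [wnorm, hT, Real.sqrt_sq (norm_nonneg _), map_sub] using
        wnorm_sub_nearestIndex_le (lam := lam) (Γ := Γs) (Y ω) i
  have hf : Measurable fun ω => nearestIndex lam Γs (Y ω) := measurable_nearestIndex.comp hYmeas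
  have hcell : ∀ j, ∫ ω in (fun ω => nearestIndex lam Γs (Y ω)) ⁻¹' {j}, Y ω ∂μ =
      μ.real ((fun ω => nearestIndex lam Γs (Y ω)) ⁻¹' {j}) • Γs j := fun j => T.injective (by
    rw [← T.integral_comp_comm, map_smul]
    exact setIntegral_preimage_eq_smul_of_forall_distortion_le (Γ := fun i => T (Γs i))
      hZ hf hnear (distortion_le_of_forall_quantErr_le T hT hopt) j)
  exact comp_ae_eq_condExp_comap hf ((T.integrable_comp_iff).1 (hZ.integrable one_le_two)) Γs hcell
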